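/- Let w = u₁ ⊕ ⋯ ⊕ u_k be a 312-avoiding permutation in Tam_n written as the direct sum of its components u₁, …, u_k, where u_i ∈ Tam_{n_i}. Then w is an Eeta win in the Tamari lattice Tam_n if and only if u_i is an Eeta win in Tam_{n_i} for every i ∈ [k]. -/

import Mathlib

variable {L : Type*} [Preorder L]

def ungN (x : L) : Set L :=
  {y | ∃ T : Set L, T.Nonempty ∧ (∀ t ∈ T, t ⋖ x) ∧ IsGLB (insert x T) y}

lemma ungN_lt {x y : L} (h : y ∈ ungN x) : y < x := by
  obtain ⟨T, ⟨t, ht⟩, hc, hglb⟩ := h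
  exact lt_of_le_of_lt (hglb.1 (Set.mem_insert_of_mem x ht)) (hc t ht).lt

attribute [local instance] WellFoundedLT.toWellFoundedRelation

mutual
  def atnissWin [WellFoundedLT L] (x : L) : Prop :=
    ∃ y, ∃ _ : y ∈ ungN x, eetaWin y
  termination_by x
  decreasing_by exact ungN_lt ‹_›

  def eetaWin [WellFoundedLT L] (x : L) : Prop :=
    ∀ y, y ∈ ungN x → atnissWin y
  termination_by x
  decreasing_by exact ungN_lt ‹_›
end

section GameAbstract

lemma eetaWin_iff [WellFoundedLT L] {x : L} :
    eetaWin x ↔ ∀ y ∈ ungN x, atnissWin y := by rw [eetaWin]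

lemma atnissWin_iff [WellFoundedLT L] {x : L} :
    atnissWin x ↔ ∃ y ∈ ungN x, eetaWin y := by
  rw [atnissWin]; exact exists_congr fun y => exists_prop ..

lemma atnissWin_iff_not_eetaWin [WellFoundedLT L] (x : L) :
    atnissWin x ↔ ¬ eetaWin x := by
  induction x using WellFoundedLT.induction with
  | _ x ih =>
    rw [atnissWin_iff, eetaWin_iff]
    push_neg
    refine exists_congr fun y => and_congr_right fun hy => ?_
    rw [ih y (ungN_lt hy)]
    exact not_not.symm

end GameAbstract

section Transfer

variable {M : Type*} [Preorder M]

lemma eetaWin_transfer [WellFoundedLT L] [WellFoundedLT M]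
    (R : L → M → Prop)
    (h1 : ∀ {x m}, R x m → ∀ x' ∈ ungN x, ∃ m' ∈ ungN m, R x' m')
    (h2 : ∀ {x m}, R x m → ∀ m' ∈ ungN m, ∃ x' ∈ ungN x, R x' m') :
    ∀ {x : L} {m : M}, R x m → (eetaWin x ↔ eetaWin m) := by
  intro x
  induction x using WellFoundedLT.induction with
  | _ x ih =>
    intro m hR
    constructor
    · intro hE
      rw [eetaWin_iff]
      intro m' hm'
      obtain ⟨x', hx', hR'⟩ := h2 hR m' hm'
      have hA : atnissWin x' := eetaWin_iff.mp hE x' hx'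
      obtain ⟨x'', hx'', hE''⟩ := atnissWin_iff.mp hA
      obtain ⟨m'', hm'', hR''⟩ := h1 hR' x'' hx''
      exact atnissWin_iff.mpr ⟨m'', hm'',
        (ih x'' ((ungN_lt hx'').trans (ungN_lt hx')) hR'').mp hE''⟩
    · intro hE
      rw [eetaWin_iff]
      intro x' hx'
      obtain ⟨m', hm', hR'⟩ := h1 hR x' hx'
      have hA : atnissWin m' := eetaWin_iff.mp hE m' hm'
      obtain ⟨m'', hm'', hE''⟩ := atnissWin_iff.mp hA
      obtain ⟨x'', hx'', hR''⟩ := h2 hR' m'' hm''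
      exact atnissWin_iff.mpr ⟨x'', hx'',
        (ih x'' ((ungN_lt hx'').trans (ungN_lt hx')) hR'').mpr hE''⟩

/-- Transfer along an order-reflecting injection with downward-closed image. -/
lemma eetaWin_embed [WellFoundedLT L] [WellFoundedLT M]
    (φ : M → L) (hφ : ∀ p q, φ p ≤ φ q ↔ p ≤ q)
    (himg : ∀ (x : L) (q : M), x ≤ φ q → ∃ p, x = φ p)
    (m : M) : eetaWin (φ m) ↔ eetaWin m := by
  have hlt : ∀ p q, φ p < φ q ↔ p < q := by
    intro p q
    simp only [lt_iff_le_not_ge, hφ]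
  have hcov : ∀ p q, φ p ⋖ φ q ↔ p ⋖ q := by
    intro p q
    constructor
    · rintro ⟨h1, h2⟩
      refine ⟨(hlt p q).mp h1, fun c hc1 hc2 => h2 ((hlt p c).mpr hc1) ((hlt c q).mpr hc2)⟩
    · rintro ⟨h1, h2⟩
      refine ⟨(hlt p q).mpr h1, fun z hz1 hz2 => ?_⟩
      obtain ⟨c, rfl⟩ := himg z q hz2.le
      exact h2 ((hlt p c).mp hz1) ((hlt c q).mp hz2)
  have hung : ∀ (q : M) (y : L), y ∈ ungN (φ q) ↔ ∃ p ∈ ungN q, y = φ p := by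
    intro q y
    constructor
    · rintro ⟨T, hTne, hTcov, hglb⟩
      have hTsub : ∀ t ∈ T, ∃ s, t = φ s := fun t ht => himg t q (hTcov t ht).lt.le
      set T' : Set M := {s | φ s ∈ T} with hT'
      have hTim : φ '' T' = T := by
        apply Set.eq_of_subset_of_subset
        · rintro _ ⟨s, hs, rfl⟩; exact hs
        · intro t ht
          obtain ⟨s, rfl⟩ := hTsub t ht
          exact ⟨s, ht, rfl⟩
      have hyle : y ≤ φ q := hglb.1 (Set.mem_insert _ _)
      obtain ⟨g, rfl⟩ := himg y q hyle
      refine ⟨g, ⟨T', ?_, ?_, ?_⟩, rfl⟩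
      · obtain ⟨t, ht⟩ := hTne
        obtain ⟨s, rfl⟩ := hTsub t ht
        exact ⟨s, ht⟩
      · intro s hs; exact (hcov s q).mp (hTcov _ hs)
      · constructor
        · rintro s (rfl | hs)
          · exact (hφ g s).mp hyle
          · exact (hφ g s).mp (hglb.1 (Set.mem_insert_of_mem _ ((hTim ▸ Set.mem_image_of_mem φ hs))))
        · intro b hb
          have : φ b ∈ lowerBounds (insert (φ q) T) := by
            rintro t (rfl | ht)
            · exact (hφ b q).mpr (hb (Set.mem_insert _ _))
            · obtain ⟨s, rfl⟩ := hTsub t ht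
              exact (hφ b s).mpr (hb (Set.mem_insert_of_mem _ ht))
          exact (hφ b g).mp (hglb.2 this)
    · rintro ⟨p, ⟨T', hT'ne, hT'cov, hglb⟩, rfl⟩
      refine ⟨φ '' T', hT'ne.image φ, ?_, ?_⟩
      · rintro _ ⟨s, hs, rfl⟩; exact (hcov s q).mpr (hT'cov s hs)
      · have : insert (φ q) (φ '' T') = φ '' insert q T' := (Set.image_insert_eq).symm
        rw [this]
        constructor
        · rintro _ ⟨s, hs, rfl⟩; exact (hφ p s).mpr (hglb.1 hs)
        · intro b hb
          have hbq : b ≤ φ q := hb (Set.mem_image_of_mem φ (Set.mem_insert _ _))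
          obtain ⟨c, rfl⟩ := himg b q hbq
          refine (hφ c p).mpr (hglb.2 ?_)
          intro s hs
          exact (hφ c s).mp (hb (Set.mem_image_of_mem φ hs))
  refine eetaWin_transfer (fun x p => x = φ p) ?_ ?_ rfl
  · rintro x p rfl x' hx'
    obtain ⟨p', hp', rfl⟩ := (hung p x').mp hx'
    exact ⟨p', hp', rfl⟩
  · rintro x p rfl p' hp'
    exact ⟨φ p', (hung p (φ p')).mpr ⟨p', hp', rfl⟩, rfl⟩

end Transfer

section ProdGame

variable {α β : Type*} [Preorder α] [Preorder β]

lemma prod_isGLB_iff {S : Set (α × β)} {p : α × β} :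
    IsGLB S p ↔ IsGLB (Prod.fst '' S) p.1 ∧ IsGLB (Prod.snd '' S) p.2 := by
  constructor
  · intro h
    constructor
    · constructor
      · rintro _ ⟨s, hs, rfl⟩; exact (h.1 hs).1
      · intro b hb
        have : (b, p.2) ∈ lowerBounds S := by
          intro s hs
          exact ⟨hb (Set.mem_image_of_mem _ hs), (h.1 hs).2⟩
        exact (h.2 this).1
    · constructor
      · rintro _ ⟨s, hs, rfl⟩; exact (h.1 hs).2
      · intro b hb
        have : (p.1, b) ∈ lowerBounds S := by
          intro s hs
          exact ⟨(h.1 hs).1, hb (Set.mem_image_of_mem _ hs)⟩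
        exact (h.2 this).2
  · rintro ⟨h1, h2⟩
    constructor
    · intro s hs
      exact ⟨h1.1 (Set.mem_image_of_mem _ hs), h2.1 (Set.mem_image_of_mem _ hs)⟩
    · intro b hb
      refine ⟨h1.2 ?_, h2.2 ?_⟩
      · rintro _ ⟨s, hs, rfl⟩; exact (hb hs).1
      · rintro _ ⟨s, hs, rfl⟩; exact (hb hs).2

variable (hα : ∀ x y : α, x ≤ y → y ≤ x → x = y) (hβ : ∀ x y : β, x ≤ y → y ≤ x → x = y)

include hβ in
lemma prod_covBy_fst {c x : α} {y : β} (h : c ⋖ x) : (c, y) ⋖ (x, y) := by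
  constructor
  · exact ⟨⟨h.1.le, le_refl y⟩, fun hle => h.1.not_ge hle.1⟩
  · rintro ⟨z1, z2⟩ hz1 hz2
    have hz2y : z2 = y := hβ _ _ hz2.1.2 hz1.1.2
    subst hz2y
    exact h.2 (lt_of_le_not_ge hz1.1.1 fun hle => hz1.not_ge ⟨hle, le_refl _⟩)
      (lt_of_le_not_ge hz2.1.1 fun hle => hz2.not_ge ⟨hle, le_refl _⟩)

include hα in
lemma prod_covBy_snd {d y : β} {x : α} (h : d ⋖ y) : (x, d) ⋖ (x, y) := by
  constructor
  · exact ⟨⟨le_refl x, h.1.le⟩, fun hle => h.1.not_ge hle.2⟩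
  · rintro ⟨z1, z2⟩ hz1 hz2
    have hz1x : z1 = x := hα _ _ hz2.1.1 hz1.1.1
    subst hz1x
    exact h.2 (lt_of_le_not_ge hz1.1.2 fun hle => hz1.not_ge ⟨le_refl _, hle⟩)
      (lt_of_le_not_ge hz2.1.2 fun hle => hz2.not_ge ⟨le_refl _, hle⟩)

include hα hβ in
lemma prod_covBy_iff {p : α × β} {x : α} {y : β} :
    p ⋖ (x, y) ↔ (p.1 ⋖ x ∧ p.2 = y) ∨ (p.1 = x ∧ p.2 ⋖ y) := by
  have plt : ∀ (q r : α × β), q.1 ≤ r.1 → q.2 ≤ r.2 → ¬ (r.1 ≤ q.1 ∧ r.2 ≤ q.2) → q < r :=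
    fun q r h1 h2 h3 => lt_of_le_not_ge ⟨h1, h2⟩ (fun hle => h3 ⟨hle.1, hle.2⟩)
  constructor
  · intro hcov
    obtain ⟨hlt, hmid⟩ := hcov
    have h1 : p.1 ≤ x := hlt.le.1
    have h2 : p.2 ≤ y := hlt.le.2
    have hcase : ¬ (x ≤ p.1) ∨ ¬ (y ≤ p.2) := by
      by_contra hc
      push_neg at hc
      exact hlt.not_ge ⟨hc.1, hc.2⟩
    have hnotboth : ¬ (p.1 < x ∧ p.2 < y) := by
      rintro ⟨ha, hb⟩
      exact hmid (plt p (p.1, y) le_rfl hb.le (fun hc => hb.not_ge hc.2))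
        (plt (p.1, y) (x, y) ha.le le_rfl (fun hc => ha.not_ge hc.1))
    rcases hcase with hc | hc
    · left
      have hp1 : p.1 < x := lt_of_le_not_ge h1 hc
      have hp2 : p.2 = y := by
        refine hβ _ _ h2 ?_
        by_contra hy
        exact hnotboth ⟨hp1, lt_of_le_not_ge h2 hy⟩
      refine ⟨⟨hp1, fun c hc1 hc2 => ?_⟩, hp2⟩
      exact hmid (plt p (c, y) hc1.le (hp2 ▸ le_rfl) (fun hcc => hc1.not_ge hcc.1))
        (plt (c, y) (x, y) hc2.le le_rfl (fun hcc => hc2.not_ge hcc.1))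
    · right
      have hp2 : p.2 < y := lt_of_le_not_ge h2 hc
      have hp1 : p.1 = x := by
        refine hα _ _ h1 ?_
        by_contra hx
        exact hnotboth ⟨lt_of_le_not_ge h1 hx, hp2⟩
      refine ⟨hp1, ⟨hp2, fun d hd1 hd2 => ?_⟩⟩
      exact hmid (plt p (x, d) (hp1 ▸ le_rfl) hd1.le (fun hcc => hd1.not_ge hcc.2))
        (plt (x, d) (x, y) le_rfl hd2.le (fun hcc => hd2.not_ge hcc.2))
  · rintro (⟨hc, hy⟩ | ⟨hx, hc⟩)
    · have := prod_covBy_fst hβ (y := y) hc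
      rwa [show (p.1, y) = p by rw [← hy]] at this
    · have := prod_covBy_snd hα (x := x) hc
      rwa [show (x, p.2) = p by rw [← hx]] at this

include hα hβ in
lemma prod_ungN_iff {x : α} {y : β} {z : α × β} :
    z ∈ ungN (x, y) ↔ (z.1 ∈ ungN x ∧ z.2 = y) ∨ (z.1 = x ∧ z.2 ∈ ungN y) ∨
      (z.1 ∈ ungN x ∧ z.2 ∈ ungN y) := by
  constructor
  · rintro ⟨T, hTne, hTcov, hglb⟩
    set T1 : Set α := {c | (c, y) ∈ T ∧ c ⋖ x} with hT1
    set T2 : Set β := {d | (x, d) ∈ T ∧ d ⋖ y} with hT2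
    have hmem : ∀ t ∈ T, (t.1 ∈ T1 ∧ t.2 = y) ∨ (t.1 = x ∧ t.2 ∈ T2) := by
      intro t ht
      rcases (prod_covBy_iff hα hβ).mp (hTcov t ht) with ⟨h1, h2⟩ | ⟨h1, h2⟩
      · left
        refine ⟨⟨?_, h1⟩, h2⟩
        have : (t.1, y) = t := by rw [← h2]
        rwa [this]
      · right
        refine ⟨h1, ⟨?_, h2⟩⟩
        have : (x, t.2) = t := by rw [← h1]
        rwa [this]
    have hfst : Prod.fst '' (insert (x, y) T) = insert x T1 := by
      ext c
      constructor
      · rintro ⟨t, (rfl | ht), rfl⟩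
        · exact Set.mem_insert _ _
        · rcases hmem t ht with ⟨h1, _⟩ | ⟨h1, _⟩
          · exact Set.mem_insert_of_mem _ h1
          · rw [h1]; exact Set.mem_insert _ _
      · rintro (rfl | hc)
        · exact ⟨(c, y), Set.mem_insert _ _, rfl⟩
        · exact ⟨(c, y), Set.mem_insert_of_mem _ hc.1, rfl⟩
    have hsnd : Prod.snd '' (insert (x, y) T) = insert y T2 := by
      ext d
      constructor
      · rintro ⟨t, (rfl | ht), rfl⟩
        · exact Set.mem_insert _ _
        · rcases hmem t ht with ⟨_, h2⟩ | ⟨_, h2⟩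
          · rw [h2]; exact Set.mem_insert _ _
          · exact Set.mem_insert_of_mem _ h2
      · rintro (rfl | hd)
        · exact ⟨(x, d), Set.mem_insert _ _, rfl⟩
        · exact ⟨(x, d), Set.mem_insert_of_mem _ hd.1, rfl⟩
    obtain ⟨hg1, hg2⟩ := prod_isGLB_iff.mp hglb
    rw [hfst] at hg1
    rw [hsnd] at hg2
    by_cases h1 : T1.Nonempty <;> by_cases h2 : T2.Nonempty
    · exact Or.inr (Or.inr ⟨⟨T1, h1, fun c hc => hc.2, hg1⟩, ⟨T2, h2, fun d hd => hd.2, hg2⟩⟩)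
    · rw [Set.not_nonempty_iff_eq_empty] at h2
      rw [h2] at hg2
      have hy : z.2 = y := by
        refine hβ _ _ (hg2.1 (Set.mem_insert _ _)) (hg2.2 ?_)
        exact fun d hd => (Set.mem_insert_iff.mp hd).elim (fun h => le_of_eq h.symm)
          (fun h => h.elim)
      exact Or.inl ⟨⟨T1, h1, fun c hc => hc.2, hg1⟩, hy⟩
    · rw [Set.not_nonempty_iff_eq_empty] at h1
      rw [h1] at hg1
      have hx : z.1 = x := by
        refine hα _ _ (hg1.1 (Set.mem_insert _ _)) (hg1.2 ?_)
        exact fun c hc => (Set.mem_insert_iff.mp hc).elim (fun h => le_of_eq h.symm)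
          (fun h => h.elim)
      exact Or.inr (Or.inl ⟨hx, ⟨T2, h2, fun d hd => hd.2, hg2⟩⟩)
    · exfalso
      obtain ⟨t, ht⟩ := hTne
      rcases hmem t ht with ⟨hm, _⟩ | ⟨_, hm⟩
      · exact h1 ⟨t.1, hm⟩
      · exact h2 ⟨t.2, hm⟩
  · rintro (⟨⟨T1, hne, hcov, hglb⟩, hz2⟩ | ⟨hz1, ⟨T2, hne, hcov, hglb⟩⟩ | ⟨⟨T1, hne1, hcov1, hglb1⟩, ⟨T2, hne2, hcov2, hglb2⟩⟩)
    · refine ⟨(fun c => (c, y)) '' T1, hne.image _, ?_, ?_⟩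
      · rintro _ ⟨c, hc, rfl⟩
        exact prod_covBy_fst hβ (hcov c hc)
      · rw [prod_isGLB_iff]
        constructor
        · have : Prod.fst '' (insert (x, y) ((fun c => (c, y)) '' T1)) = insert x T1 := by
            ext c
            constructor
            · rintro ⟨t, (rfl | ⟨c', hc', rfl⟩), rfl⟩
              · exact Set.mem_insert _ _
              · exact Set.mem_insert_of_mem _ hc'
            · rintro (rfl | hc)
              · exact ⟨(c, y), Set.mem_insert _ _, rfl⟩
              · exact ⟨(c, y), Set.mem_insert_of_mem _ ⟨c, hc, rfl⟩, rfl⟩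
          rw [this]; exact hglb
        · have : Prod.snd '' (insert (x, y) ((fun c => (c, y)) '' T1)) = {y} := by
            ext d
            constructor
            · rintro ⟨t, (rfl | ⟨c', hc', rfl⟩), rfl⟩ <;> rfl
            · intro hd
              exact ⟨(x, y), Set.mem_insert _ _, (Set.mem_singleton_iff.mp hd).symm⟩
          rw [this, hz2]
          exact isGLB_singleton
    · refine ⟨(fun d => (x, d)) '' T2, hne.image _, ?_, ?_⟩
      · rintro _ ⟨d, hd, rfl⟩
        exact prod_covBy_snd hα (hcov d hd)
      · rw [prod_isGLB_iff]
        constructor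
        · have : Prod.fst '' (insert (x, y) ((fun d => (x, d)) '' T2)) = {x} := by
            ext c
            constructor
            · rintro ⟨t, (rfl | ⟨d', hd', rfl⟩), rfl⟩ <;> rfl
            · intro hc
              exact ⟨(x, y), Set.mem_insert _ _, (Set.mem_singleton_iff.mp hc).symm⟩
          rw [this, hz1]
          exact isGLB_singleton
        · have : Prod.snd '' (insert (x, y) ((fun d => (x, d)) '' T2)) = insert y T2 := by
            ext d
            constructor
            · rintro ⟨t, (rfl | ⟨d', hd', rfl⟩), rfl⟩
              · exact Set.mem_insert _ _
              · exact Set.mem_insert_of_mem _ hd'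
            · intro hd0
              rcases Set.mem_insert_iff.mp hd0 with hd | hd
              · exact ⟨(x, y), Set.mem_insert _ _, hd.symm⟩
              · exact ⟨(x, d), Set.mem_insert_of_mem _ ⟨d, hd, rfl⟩, rfl⟩
          rw [this]; exact hglb
    · refine ⟨((fun c => (c, y)) '' T1) ∪ ((fun d => (x, d)) '' T2), (hne1.image _).mono Set.subset_union_left, ?_, ?_⟩
      · rintro _ (⟨c, hc, rfl⟩ | ⟨d, hd, rfl⟩)
        · exact prod_covBy_fst hβ (hcov1 c hc)
        · exact prod_covBy_snd hα (hcov2 d hd)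
      · rw [prod_isGLB_iff]
        constructor
        · have : Prod.fst '' (insert (x, y) (((fun c => (c, y)) '' T1) ∪ ((fun d => (x, d)) '' T2)))
              = insert x T1 := by
            ext c
            constructor
            · rintro ⟨t, (rfl | (⟨c', hc', rfl⟩ | ⟨d', hd', rfl⟩)), rfl⟩
              · exact Set.mem_insert _ _
              · exact Set.mem_insert_of_mem _ hc'
              · exact Set.mem_insert _ _
            · rintro (rfl | hc)
              · exact ⟨(c, y), Set.mem_insert _ _, rfl⟩
              · exact ⟨(c, y), Set.mem_insert_of_mem _ (Or.inl ⟨c, hc, rfl⟩), rfl⟩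
          rw [this]; exact hglb1
        · have : Prod.snd '' (insert (x, y) (((fun c => (c, y)) '' T1) ∪ ((fun d => (x, d)) '' T2)))
              = insert y T2 := by
            ext d
            constructor
            · rintro ⟨t, (rfl | (⟨c', hc', rfl⟩ | ⟨d', hd', rfl⟩)), rfl⟩
              · exact Set.mem_insert _ _
              · exact Set.mem_insert _ _
              · exact Set.mem_insert_of_mem _ hd'
            · intro hd0
              rcases Set.mem_insert_iff.mp hd0 with hd | hd
              · exact ⟨(x, y), Set.mem_insert _ _, hd.symm⟩
              · exact ⟨(x, d), Set.mem_insert_of_mem _ (Or.inr ⟨d, hd, rfl⟩), rfl⟩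
          rw [this]; exact hglb2

include hα hβ in
lemma prod_eetaWin_iff [WellFoundedLT α] [WellFoundedLT β] (p : α × β) :
    eetaWin p ↔ eetaWin p.1 ∧ eetaWin p.2 := by
  induction p using WellFoundedLT.induction with
  | _ p ih =>
    obtain ⟨x, y⟩ := p
    simp only at ih ⊢
    have ltl : ∀ {x' : α}, x' < x → (x', y) < (x, y) := fun h =>
      lt_of_le_not_ge ⟨h.le, le_rfl⟩ (fun hc => h.not_ge hc.1)
    have ltr : ∀ {y' : β}, y' < y → (x, y') < (x, y) := fun h =>
      lt_of_le_not_ge ⟨le_rfl, h.le⟩ (fun hc => h.not_ge hc.2)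
    have ltb : ∀ {x' : α} {y' : β}, x' < x → y' < y → (x', y') < (x, y) := fun h1 h2 =>
      lt_of_le_not_ge ⟨h1.le, h2.le⟩ (fun hc => h1.not_ge hc.1)
    constructor
    · intro hE
      by_contra hc
      rw [not_and_or] at hc
      have hA : atnissWin (x, y) := by
        rw [atnissWin_iff]
        rcases hc with hc | hc
        · have hAx := (atnissWin_iff_not_eetaWin x).mpr hc
          obtain ⟨x', hx', hEx'⟩ := atnissWin_iff.mp hAx
          by_cases hy : eetaWin y
          · refine ⟨(x', y), (prod_ungN_iff hα hβ).mpr (Or.inl ⟨hx', rfl⟩), ?_⟩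
            exact (ih _ (ltl (ungN_lt hx'))).mpr ⟨hEx', hy⟩
          · have hAy := (atnissWin_iff_not_eetaWin y).mpr hy
            obtain ⟨y', hy', hEy'⟩ := atnissWin_iff.mp hAy
            refine ⟨(x', y'), (prod_ungN_iff hα hβ).mpr (Or.inr (Or.inr ⟨hx', hy'⟩)), ?_⟩
            exact (ih _ (ltb (ungN_lt hx') (ungN_lt hy'))).mpr ⟨hEx', hEy'⟩
        · have hAy := (atnissWin_iff_not_eetaWin y).mpr hc
          obtain ⟨y', hy', hEy'⟩ := atnissWin_iff.mp hAy
          by_cases hx : eetaWin x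
          · refine ⟨(x, y'), (prod_ungN_iff hα hβ).mpr (Or.inr (Or.inl ⟨rfl, hy'⟩)), ?_⟩
            exact (ih _ (ltr (ungN_lt hy'))).mpr ⟨hx, hEy'⟩
          · have hAx := (atnissWin_iff_not_eetaWin x).mpr hx
            obtain ⟨x', hx', hEx'⟩ := atnissWin_iff.mp hAx
            refine ⟨(x', y'), (prod_ungN_iff hα hβ).mpr (Or.inr (Or.inr ⟨hx', hy'⟩)), ?_⟩
            exact (ih _ (ltb (ungN_lt hx') (ungN_lt hy'))).mpr ⟨hEx', hEy'⟩
      exact (atnissWin_iff_not_eetaWin (x, y)).mp hA hE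
    · rintro ⟨hEx, hEy⟩
      rw [eetaWin_iff]
      intro z hz
      rw [atnissWin_iff]
      obtain ⟨z1, z2⟩ := z
      rcases (prod_ungN_iff hα hβ).mp hz with ⟨hz1, hz2⟩ | ⟨hz1, hz2⟩ | ⟨hz1, hz2⟩ <;>
        simp only at hz1 hz2
      · subst hz2
        have hAx' : atnissWin z1 := eetaWin_iff.mp hEx z1 hz1
        obtain ⟨x'', hx'', hEx''⟩ := atnissWin_iff.mp hAx'
        refine ⟨(x'', z2), (prod_ungN_iff hα hβ (x := z1) (y := z2)).mpr (Or.inl ⟨hx'', rfl⟩), ?_⟩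
        exact (ih _ (ltl ((ungN_lt hx'').trans (ungN_lt hz1)))).mpr ⟨hEx'', hEy⟩
      · subst hz1
        have hAy' : atnissWin z2 := eetaWin_iff.mp hEy z2 hz2
        obtain ⟨y'', hy'', hEy''⟩ := atnissWin_iff.mp hAy'
        refine ⟨(z1, y''), (prod_ungN_iff hα hβ (x := z1) (y := z2)).mpr (Or.inr (Or.inl ⟨rfl, hy''⟩)), ?_⟩
        exact (ih _ (ltr ((ungN_lt hy'').trans (ungN_lt hz2)))).mpr ⟨hEx, hEy''⟩
      · have hAx' : atnissWin z1 := eetaWin_iff.mp hEx z1 hz1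
        have hAy' : atnissWin z2 := eetaWin_iff.mp hEy z2 hz2
        obtain ⟨x'', hx'', hEx''⟩ := atnissWin_iff.mp hAx'
        obtain ⟨y'', hy'', hEy''⟩ := atnissWin_iff.mp hAy'
        refine ⟨(x'', y''), (prod_ungN_iff hα hβ (x := z1) (y := z2)).mpr
          (Or.inr (Or.inr ⟨hx'', hy''⟩)), ?_⟩
        exact (ih _ (ltb ((ungN_lt hx'').trans (ungN_lt hz1))
          ((ungN_lt hy'').trans (ungN_lt hz2)))).mpr ⟨hEx'', hEy''⟩

end ProdGame

/-- The symmetric group on `Fin n`, to be equipped with the (right) weak order. -/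
abbrev Weak (n : ℕ) := Equiv.Perm (Fin n)

/-- The set of inversions of a permutation `w`: pairs `(i, j)` with `i < j` and
`w⁻¹ i > w⁻¹ j`. -/
def invSet {n : ℕ} (w : Weak n) : Finset (Fin n × Fin n) :=
  Finset.univ.filter fun p => p.1 < p.2 ∧ w.symm p.2 < w.symm p.1

/-- The (right) weak order on `S_n`: `u ≤ v` iff every inversion of `u` is an
inversion of `v`. -/
instance {n : ℕ} : Preorder (Weak n) where
  le u v := invSet u ⊆ invSet v
  le_refl u := subset_rfl
  le_trans u v w h1 h2 := fun x hx => h2 (h1 hx)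

instance {n : ℕ} : WellFoundedLT (Weak n) := by
  constructor
  have key : ∀ u v : Weak n, u < v → (invSet u).card < (invSet v).card := by
    intro u v h
    have h' := lt_iff_le_not_ge.mp h
    have hle : invSet u ⊆ invSet v := h'.1
    have hnle : ¬ invSet v ⊆ invSet u := fun hc => h'.2 hc
    exact Finset.card_lt_card (Finset.ssubset_def.mpr ⟨hle, hnle⟩)
  exact Subrelation.wf (fun {u v} h => key u v h)
    (InvImage.wf (fun w => (invSet w).card) Nat.lt_wfRel.wf)

/-- A permutation is 312-avoiding if it contains no occurrence of the pattern 312. -/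
def Avoids312 {n : ℕ} (w : Equiv.Perm (Fin n)) : Prop :=
  ¬ ∃ i₁ i₂ i₃ : Fin n, i₁ < i₂ ∧ i₂ < i₃ ∧ w i₂ < w i₃ ∧ w i₃ < w i₁

/-- The `n`-th Tamari lattice, realized as the 312-avoiding permutations in `S_n` under
the weak order. -/
abbrev Tam (n : ℕ) := {w : Weak n // Avoids312 w}


/-- The direct sum `u ⊕ v` of two permutations. -/
def osum {m n : ℕ} (u : Equiv.Perm (Fin m)) (v : Equiv.Perm (Fin n)) :
    Equiv.Perm (Fin (m + n)) :=
  (Equiv.permCongr finSumFinEquiv) (u.sumCongr v)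

/-- A permutation is indecomposable if it is not a direct sum of two nonempty
permutations. -/
def Indecomposable {n : ℕ} (w : Equiv.Perm (Fin n)) : Prop :=
  ¬ ∃ (a b : ℕ) (h : a + b = n) (u : Equiv.Perm (Fin a)) (v : Equiv.Perm (Fin b)),
      1 ≤ a ∧ 1 ≤ b ∧ w = (finCongr h).permCongr (osum u v)

/-- The direct sum of a list of permutations, together with its size. -/
def osumList : List ((k : ℕ) × Equiv.Perm (Fin k)) → (k : ℕ) × Equiv.Perm (Fin k)
  | [] => ⟨0, 1⟩
  | x :: l => ⟨x.1 + (osumList l).1, osum x.2 (osumList l).2⟩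

/-- `w` has exactly `r` components: it is a direct sum of `r` (nonempty) indecomposable
permutations. -/
def HasComponents {n : ℕ} (w : Equiv.Perm (Fin n)) (r : ℕ) : Prop :=
  ∃ l : List ((k : ℕ) × Equiv.Perm (Fin k)), l.length = r ∧
    (∀ x ∈ l, 1 ≤ x.1 ∧ Indecomposable x.2) ∧
    ∃ h : (osumList l).1 = n, w = (finCongr h).permCongr (osumList l).2

section Concrete

open Finset

lemma invSet_mem {n : ℕ} {w : Weak n} {p : Fin n × Fin n} :
    p ∈ invSet w ↔ p.1 < p.2 ∧ w.symm p.2 < w.symm p.1 := by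
  simp [invSet]

/-- Antisymmetry of the weak order. -/
lemma weak_antisymm {n : ℕ} (u v : Weak n) (h1 : u ≤ v) (h2 : v ≤ u) : u = v := by
  have hset : invSet u = invSet v := le_antisymm h1 h2
  have key : ∀ p q : Fin n, u.symm p < u.symm q ↔ v.symm p < v.symm q := by
    have aux : ∀ p q : Fin n, p < q → (u.symm q < u.symm p ↔ v.symm q < v.symm p) := by
      intro p q hpq
      constructor
      · intro h
        have : (p, q) ∈ invSet u := invSet_mem.mpr ⟨hpq, h⟩
        exact (invSet_mem.mp (hset ▸ this)).2
      · intro h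
        have : (p, q) ∈ invSet v := invSet_mem.mpr ⟨hpq, h⟩
        exact (invSet_mem.mp (hset ▸ this)).2
    intro p q
    rcases lt_trichotomy p q with hpq | rfl | hpq
    · rw [← not_iff_not]
      push_neg
      have hne : ∀ (w' : Weak n), w'.symm p ≠ w'.symm q := by
        intro w' hc
        exact hpq.ne (w'.symm.injective hc)
      constructor
      · intro h
        rcases lt_or_eq_of_le h with h | h
        · exact ((aux p q hpq).mp h).le
        · exact (hne u h.symm).elim
      · intro h
        rcases lt_or_eq_of_le h with h | h
        · exact ((aux p q hpq).mpr h).le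
        · exact (hne v h.symm).elim
    · simp
    · exact aux q p hpq
  -- strictly monotone `v.symm ∘ u.symm⁻¹` must be the identity
  have hmono : StrictMono (fun i => v.symm (u.symm.symm i)) := by
    intro i j hij
    exact (key (u.symm.symm i) (u.symm.symm j)).mp (by simpa using hij)
  have hid : (fun i => v.symm (u.symm.symm i)) = id := by
    have hr : Set.range (fun i => v.symm (u.symm.symm i)) = Set.range (id : Fin n → Fin n) := by
      rw [Set.range_id]
      apply Set.eq_univ_of_forall
      intro j
      exact ⟨u.symm (v.symm.symm j), by simp⟩
    exact (@StrictMono.range_inj (Fin n) (Fin n) _ _ (inferInstance : WellFoundedLT (Fin n)) _ _ hmono strictMono_id).mp hr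
  have hsymm : v.symm = u.symm := by
    ext p
    have h0 := congrFun hid (u.symm p)
    simp only [Equiv.symm_symm, Equiv.apply_symm_apply, id_eq] at h0
    exact congrArg Fin.val h0
  have h1 := congrArg Equiv.symm hsymm
  simp only [Equiv.symm_symm] at h1
  exact h1.symm

section OSum

variable {a b : ℕ}

lemma osum_castAdd (u : Weak a) (v : Weak b) (i : Fin a) :
    osum u v (Fin.castAdd b i) = Fin.castAdd b (u i) := by
  simp [osum, Equiv.permCongr_apply, Equiv.sumCongr_apply]

lemma osum_natAdd (u : Weak a) (v : Weak b) (j : Fin b) :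
    osum u v (Fin.natAdd a j) = Fin.natAdd a (v j) := by
  simp [osum, Equiv.permCongr_apply, Equiv.sumCongr_apply]

lemma osum_symm_castAdd (u : Weak a) (v : Weak b) (i : Fin a) :
    (osum u v).symm (Fin.castAdd b i) = Fin.castAdd b (u.symm i) := by
  rw [Equiv.symm_apply_eq, osum_castAdd, Equiv.apply_symm_apply]

lemma osum_symm_natAdd (u : Weak a) (v : Weak b) (j : Fin b) :
    (osum u v).symm (Fin.natAdd a j) = Fin.natAdd a (v.symm j) := by
  rw [Equiv.symm_apply_eq, osum_natAdd, Equiv.apply_symm_apply]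

lemma osum_inv_cc (u : Weak a) (v : Weak b) (i i' : Fin a) :
    (Fin.castAdd b i, Fin.castAdd b i') ∈ invSet (osum u v) ↔ (i, i') ∈ invSet u := by
  simp only [invSet_mem, osum_symm_castAdd]
  simp only [Fin.lt_def, Fin.coe_castAdd]

lemma osum_inv_nn (u : Weak a) (v : Weak b) (j j' : Fin b) :
    (Fin.natAdd a j, Fin.natAdd a j') ∈ invSet (osum u v) ↔ (j, j') ∈ invSet v := by
  simp only [invSet_mem, osum_symm_natAdd]
  simp only [Fin.lt_def, Fin.coe_natAdd]
  omega

lemma osum_inv_cn (u : Weak a) (v : Weak b) (i : Fin a) (j : Fin b) :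
    (Fin.castAdd b i, Fin.natAdd a j) ∉ invSet (osum u v) := by
  simp only [invSet_mem, osum_symm_castAdd, osum_symm_natAdd]
  simp only [Fin.lt_def, Fin.coe_natAdd, Fin.coe_castAdd]
  intro h
  have := (u.symm i).isLt
  omega

lemma osum_inv_nc (u : Weak a) (v : Weak b) (i : Fin a) (j : Fin b) :
    (Fin.natAdd a j, Fin.castAdd b i) ∉ invSet (osum u v) := by
  simp only [invSet_mem]
  simp only [Fin.lt_def, Fin.coe_natAdd, Fin.coe_castAdd]
  intro h
  have := i.isLt
  omega

/-- Case analysis principle for `Fin (a + b)`. -/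
lemma fin_add_cases (x : Fin (a + b)) :
    (∃ i : Fin a, x = Fin.castAdd b i) ∨ (∃ j : Fin b, x = Fin.natAdd a j) := by
  by_cases h : (x : ℕ) < a
  · exact Or.inl ⟨⟨x, h⟩, by ext; simp⟩
  · exact Or.inr ⟨⟨x - a, by omega⟩, by ext; simp; omega⟩

lemma osum_le_osum (u u' : Weak a) (v v' : Weak b) :
    osum u v ≤ osum u' v' ↔ u ≤ u' ∧ v ≤ v' := by
  constructor
  · intro h
    constructor
    · intro p hp
      obtain ⟨p1, p2⟩ := p
      exact (osum_inv_cc u' v' p1 p2).mp (h ((osum_inv_cc u v p1 p2).mpr hp))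
    · intro p hp
      obtain ⟨p1, p2⟩ := p
      exact (osum_inv_nn u' v' p1 p2).mp (h ((osum_inv_nn u v p1 p2).mpr hp))
  · rintro ⟨h1, h2⟩
    intro p hp
    obtain ⟨p1, p2⟩ := p
    rcases fin_add_cases p1 with ⟨i, rfl⟩ | ⟨j, rfl⟩ <;>
      rcases fin_add_cases p2 with ⟨i', rfl⟩ | ⟨j', rfl⟩
    · exact (osum_inv_cc u' v' i i').mpr (h1 ((osum_inv_cc u v i i').mp hp))
    · exact absurd hp (osum_inv_cn u v i j')
    · exact absurd hp (osum_inv_nc u v i' j)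
    · exact (osum_inv_nn u' v' j j').mpr (h2 ((osum_inv_nn u v j j').mp hp))

lemma osum_crossfree (u : Weak a) (v : Weak b) {p q : Fin (a + b)}
    (hp : (p : ℕ) < a) (hq : a ≤ (q : ℕ)) : (p, q) ∉ invSet (osum u v) := by
  rcases fin_add_cases p with ⟨i, rfl⟩ | ⟨j, rfl⟩
  · rcases fin_add_cases q with ⟨i', rfl⟩ | ⟨j', rfl⟩
    · simp only [Fin.coe_castAdd] at hq
      exact absurd i'.isLt (by omega)
    · exact osum_inv_cn u v i j'
  · simp only [Fin.coe_natAdd] at hp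
    omega

end OSum

section Decompose

variable {a b : ℕ}

lemma osum_decompose (z : Weak (a + b))
    (hz : ∀ p q : Fin (a + b), (p : ℕ) < a → a ≤ (q : ℕ) → (p, q) ∉ invSet z) :
    ∃ (z1 : Weak a) (z2 : Weak b), z = osum z1 z2 := by
  have hcross : ∀ p q : Fin (a + b), (p : ℕ) < a → a ≤ (q : ℕ) → z.symm p < z.symm q := by
    intro p q hp hq
    have h1 : p < q := Fin.lt_def.mpr (by omega)
    have h2 : ¬ (z.symm q < z.symm p) := fun hc => hz p q hp hq (invSet_mem.mpr ⟨h1, hc⟩)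
    have hne : z.symm p ≠ z.symm q := fun hc => (by omega : (p : ℕ) ≠ q) (by
      have := z.symm.injective hc
      exact congrArg Fin.val this)
    exact lt_of_le_of_ne (not_lt.mp h2) hne
  have hblock1 : ∀ p : Fin (a + b), (p : ℕ) < a → ((z.symm p : Fin (a+b)) : ℕ) < a := by
    intro p hp
    by_contra hc
    push_neg at hc
    have hab : a < a + b := lt_of_le_of_lt hc (z.symm p).isLt
    set x0 : Fin (a + b) := ⟨a, hab⟩ with hx0
    have hsub : Finset.image z.symm (Finset.Ici x0) ⊆ Finset.Ioi (z.symm p) := by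
      intro y hy
      obtain ⟨q, hq, rfl⟩ := Finset.mem_image.mp hy
      have : a ≤ (q : ℕ) := by
        have h0 : x0 ≤ q := Finset.mem_Ici.mp hq
        exact h0
      exact Finset.mem_Ioi.mpr (hcross p q hp this)
    have hc1 := Finset.card_le_card hsub
    rw [Finset.card_image_of_injective _ z.symm.injective, Fin.card_Ici, Fin.card_Ioi] at hc1
    simp only [hx0] at hc1
    have := (z.symm p).isLt
    omega
  have hblock2 : ∀ p : Fin (a + b), a ≤ (p : ℕ) → a ≤ ((z.symm p : Fin (a+b)) : ℕ) := by
    intro p hp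
    by_contra hc
    push_neg at hc
    have hab : a < a + b := lt_of_le_of_lt hp p.isLt
    set x0 : Fin (a + b) := ⟨a, hab⟩ with hx0
    have hsub : Finset.image z.symm (Finset.Iio x0) ⊆ Finset.Iio (z.symm p) := by
      intro y hy
      obtain ⟨q, hq, rfl⟩ := Finset.mem_image.mp hy
      have : (q : ℕ) < a := by
        have h0 : q < x0 := Finset.mem_Iio.mp hq
        exact h0
      exact Finset.mem_Iio.mpr (hcross q p this hp)
    have hc1 := Finset.card_le_card hsub
    rw [Finset.card_image_of_injective _ z.symm.injective, Fin.card_Iio, Fin.card_Iio] at hc1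
    simp only [hx0] at hc1
    omega
  have happ : ∀ x : Fin (a + b), ((z x : Fin (a+b)) : ℕ) < a ↔ (x : ℕ) < a := by
    intro x
    constructor
    · intro h
      have := hblock1 (z x) h
      rwa [Equiv.symm_apply_apply] at this
    · intro h
      by_contra hc
      push_neg at hc
      have := hblock2 (z x) hc
      rw [Equiv.symm_apply_apply] at this
      omega
  have hinj1 : Function.Injective (fun i : Fin a => (⟨(z (Fin.castAdd b i) : Fin (a+b)), by
      have := (happ (Fin.castAdd b i)).mpr (by simp [i.isLt])
      exact this⟩ : Fin a)) := by
    intro i i' h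
    simp only [Fin.mk.injEq] at h
    have : z (Fin.castAdd b i) = z (Fin.castAdd b i') := Fin.ext h
    have h5 := congrArg Fin.val (z.injective this)
    simp only [Fin.coe_castAdd] at h5
    exact Fin.ext h5
  have hinj2 : Function.Injective (fun j : Fin b => (⟨((z (Fin.natAdd a j) : Fin (a+b)) : ℕ) - a, by
      have h1 : a ≤ ((z (Fin.natAdd a j) : Fin (a+b)) : ℕ) := by
        by_contra hc
        push_neg at hc
        have := (happ (Fin.natAdd a j)).mp hc
        simp at this
      have := (z (Fin.natAdd a j)).isLt
      omega⟩ : Fin b)) := by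
    intro j j' h
    simp only [Fin.mk.injEq] at h
    have h1 : a ≤ ((z (Fin.natAdd a j) : Fin (a+b)) : ℕ) := by
      by_contra hc
      push_neg at hc
      have := (happ (Fin.natAdd a j)).mp hc
      simp at this
    have h2 : a ≤ ((z (Fin.natAdd a j') : Fin (a+b)) : ℕ) := by
      by_contra hc
      push_neg at hc
      have := (happ (Fin.natAdd a j')).mp hc
      simp at this
    have : z (Fin.natAdd a j) = z (Fin.natAdd a j') := Fin.ext (by omega)
    have := z.injective this
    have := congrArg Fin.val this
    simp only [Fin.coe_natAdd] at this
    exact Fin.ext (by omega)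
  refine ⟨Equiv.ofBijective _ (Finite.injective_iff_bijective.mp hinj1),
    Equiv.ofBijective _ (Finite.injective_iff_bijective.mp hinj2), ?_⟩
  ext x
  rcases fin_add_cases x with ⟨i, rfl⟩ | ⟨j, rfl⟩
  · rw [osum_castAdd]
    simp only [Equiv.ofBijective_apply, Fin.coe_castAdd]
  · rw [osum_natAdd]
    simp only [Equiv.ofBijective_apply, Fin.coe_natAdd]
    have h1 : a ≤ ((z (Fin.natAdd a j) : Fin (a+b)) : ℕ) := by
      by_contra hc
      push_neg at hc
      have := (happ (Fin.natAdd a j)).mp hc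
      simp at this
    omega

lemma avoids312_osum_iff (u : Weak a) (v : Weak b) :
    Avoids312 (osum u v) ↔ Avoids312 u ∧ Avoids312 v := by
  have happc : ∀ i : Fin a, ((osum u v (Fin.castAdd b i) : Fin (a+b)) : ℕ) = (u i : ℕ) := by
    intro i; rw [osum_castAdd]; rfl
  have happn : ∀ j : Fin b, ((osum u v (Fin.natAdd a j) : Fin (a+b)) : ℕ) = a + (v j : ℕ) := by
    intro j; rw [osum_natAdd]; rfl
  constructor
  · intro h
    constructor
    · rintro ⟨i1, i2, i3, h1, h2, h3, h4⟩
      refine h ⟨Fin.castAdd b i1, Fin.castAdd b i2, Fin.castAdd b i3, ?_, ?_, ?_, ?_⟩ <;>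
        simp only [Fin.lt_def, Fin.coe_castAdd, happc] <;> [exact h1; exact h2; exact h3; exact h4]
    · rintro ⟨j1, j2, j3, h1, h2, h3, h4⟩
      refine h ⟨Fin.natAdd a j1, Fin.natAdd a j2, Fin.natAdd a j3, ?_, ?_, ?_, ?_⟩ <;>
        simp only [Fin.lt_def, Fin.coe_natAdd, happn] <;> omega
  · rintro ⟨hu, hv⟩ ⟨i1, i2, i3, h1, h2, h3, h4⟩
    set w := osum u v with hw
    have hblk : ∀ x : Fin (a + b), ((w x : Fin (a+b)) : ℕ) < a ↔ (x : ℕ) < a := by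
      intro x
      rcases fin_add_cases x with ⟨i, rfl⟩ | ⟨j, rfl⟩
      · rw [happc]
        simp only [Fin.coe_castAdd]
        exact ⟨fun _ => i.isLt, fun _ => (u i).isLt⟩
      · rw [happn]
        simp only [Fin.coe_natAdd]
        omega
    simp only [Fin.lt_def] at h1 h2 h3 h4
    by_cases hc : (i1 : ℕ) < a
    · have hw1 : ((w i1 : Fin (a+b)) : ℕ) < a := (hblk i1).mpr hc
      have hw3 : ((w i3 : Fin (a+b)) : ℕ) < a := by omega
      have hw2 : ((w i2 : Fin (a+b)) : ℕ) < a := by omega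
      have hi3 : (i3 : ℕ) < a := (hblk i3).mp hw3
      have hi2 : (i2 : ℕ) < a := (hblk i2).mp hw2
      refine hu ⟨⟨i1, hc⟩, ⟨i2, hi2⟩, ⟨i3, hi3⟩, Fin.mk_lt_mk.mpr (by omega),
        Fin.mk_lt_mk.mpr (by omega), ?_, ?_⟩
      · have e2 : i2 = Fin.castAdd b ⟨i2, hi2⟩ := Fin.ext rfl
        have e3 : i3 = Fin.castAdd b ⟨i3, hi3⟩ := Fin.ext rfl
        rw [e2, e3] at h3
        rw [happc, happc] at h3
        exact Fin.lt_def.mpr h3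
      · have e1 : i1 = Fin.castAdd b ⟨i1, hc⟩ := Fin.ext rfl
        have e3 : i3 = Fin.castAdd b ⟨i3, hi3⟩ := Fin.ext rfl
        rw [e1, e3] at h4
        rw [happc, happc] at h4
        exact Fin.lt_def.mpr h4
    · push_neg at hc
      have hi2 : a ≤ (i2 : ℕ) := by omega
      have hi3 : a ≤ (i3 : ℕ) := by omega
      have hw1 : a ≤ ((w i1 : Fin (a+b)) : ℕ) := not_lt.mp (fun hh => absurd ((hblk i1).mp hh) (by omega))
      have hw2 : a ≤ ((w i2 : Fin (a+b)) : ℕ) := not_lt.mp (fun hh => absurd ((hblk i2).mp hh) (by omega))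
      have hw3 : a ≤ ((w i3 : Fin (a+b)) : ℕ) := not_lt.mp (fun hh => absurd ((hblk i3).mp hh) (by omega))
      have hb1 : (i1 : ℕ) - a < b := by have := i1.isLt; omega
      have hb2 : (i2 : ℕ) - a < b := by have := i2.isLt; omega
      have hb3 : (i3 : ℕ) - a < b := by have := i3.isLt; omega
      refine hv ⟨⟨(i1 : ℕ) - a, hb1⟩, ⟨(i2 : ℕ) - a, hb2⟩, ⟨(i3 : ℕ) - a, hb3⟩,
        Fin.mk_lt_mk.mpr (by omega), Fin.mk_lt_mk.mpr (by omega), ?_, ?_⟩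
      · have e2 : i2 = Fin.natAdd a ⟨(i2 : ℕ) - a, hb2⟩ := Fin.ext (by simp only [Fin.coe_natAdd]; omega)
        have e3 : i3 = Fin.natAdd a ⟨(i3 : ℕ) - a, hb3⟩ := Fin.ext (by simp only [Fin.coe_natAdd]; omega)
        rw [e2, e3] at h3
        rw [happn, happn] at h3
        exact Fin.lt_def.mpr (by omega)
      · have e1 : i1 = Fin.natAdd a ⟨(i1 : ℕ) - a, hb1⟩ := Fin.ext (by simp only [Fin.coe_natAdd]; omega)
        have e3 : i3 = Fin.natAdd a ⟨(i3 : ℕ) - a, hb3⟩ := Fin.ext (by simp only [Fin.coe_natAdd]; omega)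
        rw [e1, e3] at h4
        rw [happn, happn] at h4
        exact Fin.lt_def.mpr (by omega)

end Decompose

section Binary

variable {a b : ℕ}

lemma tam_antisymm {n : ℕ} : ∀ x y : Tam n, x ≤ y → y ≤ x → x = y :=
  fun x y h1 h2 => Subtype.ext (weak_antisymm _ _ h1 h2)

/-- The direct sum as a map `Tam a × Tam b → Tam (a+b)`. -/
def tamOsum (p : Tam a × Tam b) : Tam (a + b) :=
  ⟨osum p.1.val p.2.val, (avoids312_osum_iff _ _).mpr ⟨p.1.prop, p.2.prop⟩⟩

lemma tamOsum_le_iff (p q : Tam a × Tam b) : tamOsum p ≤ tamOsum q ↔ p ≤ q := by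
  show osum _ _ ≤ osum _ _ ↔ _
  rw [osum_le_osum]
  exact Iff.rfl

lemma tamOsum_img (x : Tam (a + b)) (q : Tam a × Tam b) (h : x ≤ tamOsum q) :
    ∃ p, x = tamOsum p := by
  have hsub : invSet x.val ⊆ invSet (tamOsum q).val := h
  have hcross : ∀ p q' : Fin (a + b), (p : ℕ) < a → a ≤ (q' : ℕ) → (p, q') ∉ invSet x.val :=
    fun p q' hp hq' hc => osum_crossfree _ _ hp hq' (hsub hc)
  obtain ⟨z1, z2, hz⟩ := osum_decompose x.val hcross
  have hav : Avoids312 (osum z1 z2) := hz ▸ x.prop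
  obtain ⟨h1, h2⟩ := (avoids312_osum_iff z1 z2).mp hav
  exact ⟨(⟨z1, h1⟩, ⟨z2, h2⟩), Subtype.ext hz⟩

lemma tam_binary (u : Tam a) (v : Tam b) (w : Tam (a + b)) (hw : w.val = osum u.val v.val) :
    eetaWin w ↔ eetaWin u ∧ eetaWin v := by
  have h1 := eetaWin_embed tamOsum tamOsum_le_iff tamOsum_img (u, v)
  have h2 : tamOsum (u, v) = w := Subtype.ext hw.symm
  rw [h2] at h1
  exact h1.trans (prod_eetaWin_iff tam_antisymm tam_antisymm (u, v))

end Binary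

section ListAssembly

lemma avoids_osumList : ∀ (l : List ((k : ℕ) × Equiv.Perm (Fin k))),
    (∀ x ∈ l, Avoids312 x.2) → Avoids312 (osumList l).2
  | [] => fun _ => by rintro ⟨i, _⟩; exact i.elim0
  | x :: l => fun h => (avoids312_osum_iff _ _).mpr
      ⟨h x (List.mem_cons_self), avoids_osumList l fun y hy => h y (List.mem_cons_of_mem _ hy)⟩

lemma tam_aux : ∀ (l : List ((k : ℕ) × Equiv.Perm (Fin k))),
    (∀ x ∈ l, Avoids312 x.2) → ∀ (w : Tam (osumList l).1), w.val = (osumList l).2 →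
    (eetaWin w ↔ ∀ x ∈ l, ∀ hx : Avoids312 x.2, eetaWin (⟨x.2, hx⟩ : Tam x.1))
  | [] => by
    intro _ w _
    refine iff_of_true ?_ (by simp)
    rw [eetaWin_iff]
    intro y hy
    have hyw : y = w := Subtype.ext (Equiv.ext fun i => i.elim0)
    have hlt := ungN_lt hy
    rw [hyw] at hlt
    exact absurd hlt (lt_irrefl w)
  | x :: l => by
    intro hcomp w hw
    have havl : Avoids312 (osumList l).2 :=
      avoids_osumList l (fun y hy => hcomp y (List.mem_cons_of_mem _ hy))
    have hx : Avoids312 x.2 := hcomp x (List.mem_cons_self)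
    have hbin := tam_binary ⟨x.2, hx⟩ ⟨(osumList l).2, havl⟩ w hw
    have hIH := tam_aux l (fun y hy => hcomp y (List.mem_cons_of_mem _ hy))
      ⟨(osumList l).2, havl⟩ rfl
    refine hbin.trans ?_
    rw [hIH]
    constructor
    · rintro ⟨h1, h2⟩ y hy
      rcases List.mem_cons.mp hy with rfl | hy
      · intro _; exact h1
      · intro hx'; exact h2 y hy hx'
    · intro h
      exact ⟨h x (List.mem_cons_self) hx, fun y hy hx' => h y (List.mem_cons_of_mem _ hy) hx'⟩

end ListAssembly

end Concrete

/-- A 312-avoiding permutation `w ∈ Tam_n`, written as the direct sum of its (indecomposable,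
312-avoiding) components `u₁ ⊕ ⋯ ⊕ u_k` recorded in the list `l`, is an Eeta win in the
Tamari lattice `Tam_n` if and only if each component `u_i` is an Eeta win in its own
Tamari lattice. -/
theorem tamari_eetaWin_components {n : ℕ} (hn : 1 ≤ n)
    (l : List ((k : ℕ) × Equiv.Perm (Fin k))) (hl : l ≠ [])
    (hcomp : ∀ x ∈ l, 1 ≤ x.1 ∧ Indecomposable x.2 ∧ Avoids312 x.2)
    (h : (osumList l).1 = n) (w : Tam n)
    (hw : w.val = (finCongr h).permCongr (osumList l).2) :
    eetaWin w ↔ ∀ x ∈ l, ∀ hx : Avoids312 x.2, eetaWin (⟨x.2, hx⟩ : Tam x.1) := by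
  subst h
  have hw' : w.val = (osumList l).2 := by
    rw [hw, finCongr_refl]
    exact Equiv.ext fun x => rfl
  exact tam_aux l (fun x hx => (hcomp x hx).2.2) w hw'
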